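/- For every q = 2^m there exists a dictionary D ∈ R^{q⁴ × q⁴(q+1)} that is a union of q+1 orthonormal bases of R^{q⁴}, with mutual coherence μ(D) = 1/q² and spark η(D) = q² + q; hence η(D)·μ(D) = 1 + 1/q while η(D) > 1 + 1/μ(D), showing the Gribonval–Nielsen bound η(D) ≥ (1 + 1/q)/μ(D) is tight and strictly sharper than the general bound η(D) ≥ 1 + 1/μ(D) for this dictionary. -/

import Mathlib

open Finset
open scoped Classical

namespace TightDict

instance : Fact (Nat.Prime 2) := ⟨Nat.prime_two⟩

variable (m : ℕ)

abbrev K (m : ℕ) := GaloisField 2 m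

noncomputable instance : Fintype (K m) := Fintype.ofFinite _

abbrev V (m : ℕ) := K m × K m

/-- the real character of `ZMod 2` -/
noncomputable def chi : ZMod 2 → ℝ := fun a => if a = 0 then 1 else -1

lemma zmod2_cases (a : ZMod 2) : a = 0 ∨ a = 1 := by revert a; decide

lemma chi_add (a b : ZMod 2) : chi (a + b) = chi a * chi b := by
  have h11 : (1 + 1 : ZMod 2) = 0 := by decide
  rcases zmod2_cases a with ha | ha <;> rcases zmod2_cases b with hb | hb <;>
    subst ha <;> subst hb <;> simp [chi, h11]

lemma chi_zero : chi 0 = 1 := by simp [chi]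

lemma abs_chi (a : ZMod 2) : |chi a| = 1 := by
  rcases zmod2_cases a with ha | ha <;> subst ha <;> norm_num [chi]

lemma chi_add_one (a : ZMod 2) : chi (a + 1) = - chi a := by
  rw [chi_add]; norm_num [chi]

noncomputable def lam : K m →ₗ[ZMod 2] ZMod 2 :=
  (Module.finBasis (ZMod 2) (K m)).coord ⟨0, Module.finrank_pos⟩

noncomputable def c0 : K m := Module.finBasis (ZMod 2) (K m) ⟨0, Module.finrank_pos⟩

lemma lam_c0 : lam m (c0 m) = 1 := by simp [lam, c0]

noncomputable def bee (x y : K m) : ZMod 2 := lam m (x * y)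

lemma bee_zero_left (y : K m) : bee m 0 y = 0 := by simp [bee]

lemma bee_add_left (x y z : K m) : bee m (x + y) z = bee m x z + bee m y z := by
  simp [bee, add_mul]

noncomputable def pr (t w : V m) : ZMod 2 := bee m t.1 w.1 + bee m t.2 w.2

lemma pr_add_left (t t' w : V m) : pr m (t + t') w = pr m t w + pr m t' w := by
  simp only [pr, Prod.fst_add, Prod.snd_add, bee_add_left]; abel

lemma pr_zero_left (w : V m) : pr m 0 w = 0 := by
  simp [pr, bee_zero_left]

lemma sum_chi_bee {u : K m} (hu : u ≠ 0) : ∑ x : K m, chi (bee m u x) = 0 := by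
  classical
  have hc : u * (c0 m * u⁻¹) = c0 m := by field_simp
  have key : ∀ x : K m, chi (bee m u (x + c0 m * u⁻¹)) = - chi (bee m u x) := by
    intro x
    have : bee m u (x + c0 m * u⁻¹) = bee m u x + 1 := by
      simp only [bee, mul_add, map_add, hc, lam_c0]
    rw [this, chi_add_one]
  have h2 : ∑ x : K m, chi (bee m u (x + c0 m * u⁻¹)) = ∑ x : K m, chi (bee m u x) :=
    Fintype.sum_equiv (Equiv.addRight (c0 m * u⁻¹)) _ _ (fun x => rfl)
  have h3 : ∑ x : K m, chi (bee m u x) = - ∑ x : K m, chi (bee m u x) := by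
    calc ∑ x : K m, chi (bee m u x) = ∑ x : K m, chi (bee m u (x + c0 m * u⁻¹)) := h2.symm
      _ = ∑ x : K m, - chi (bee m u x) := Finset.sum_congr rfl (fun x _ => key x)
      _ = - ∑ x : K m, chi (bee m u x) := by rw [Finset.sum_neg_distrib]
  linarith

lemma sum_chi_pr {s : V m} (hs : s ≠ 0) : ∑ w : V m, chi (pr m s w) = 0 := by
  classical
  rw [Fintype.sum_prod_type]
  have : ∀ w1 w2, chi (pr m s (w1, w2)) = chi (bee m s.1 w1) * chi (bee m s.2 w2) := by
    intro w1 w2; rw [pr, ← chi_add]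
  simp only [this]
  rcases eq_or_ne s.1 0 with h1 | h1
  · have h2 : s.2 ≠ 0 := by
      intro h2; exact hs (Prod.ext h1 h2)
    simp only [← Finset.mul_sum, sum_chi_bee m h2, mul_zero, Finset.sum_const_zero]
  · simp only [← Finset.sum_mul, ← Finset.mul_sum]
    rw [sum_chi_bee m h1, zero_mul]

lemma char2_add_self (x : K m) : x + x = 0 := CharTwo.add_self_eq_zero x

lemma char2_eq {x y : K m} (h : x + y = 0) : x = y := by
  rw [add_eq_zero_iff_eq_neg] at h
  rw [h, CharTwo.neg_eq]

lemma c0_ne : c0 m ≠ 0 := by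
  intro h
  have h1 := lam_c0 m
  rw [h, map_zero] at h1
  exact one_ne_zero h1.symm

/-- squaring is a bijection of `K` (Frobenius) -/
lemma sq_bij : Function.Bijective (fun x : K m => x * x) := by
  rw [← Finite.injective_iff_bijective]
  intro x y hxy
  simp only at hxy
  apply char2_eq m
  have : (x + y) * (x + y) = 0 := by
    rw [CharTwo.add_mul_self, hxy, char2_add_self]
  exact mul_self_eq_zero.mp this

noncomputable def sqE : K m ≃ K m := Equiv.ofBijective _ (sq_bij m)

lemma sqE_apply (x : K m) : sqE m x = x * x := rfl

/-- `s ↦ c0 * s⁻¹`, a bijection of `K` -/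
noncomputable def inva : K m ≃ K m where
  toFun s := c0 m * s⁻¹
  invFun t := c0 m * t⁻¹
  left_inv := by
    intro s
    rcases eq_or_ne s 0 with h | h
    · simp [h]
    · field_simp [c0_ne m]
  right_inv := by
    intro s
    rcases eq_or_ne s 0 with h | h
    · simp [h]
    · field_simp [c0_ne m]

lemma inva_apply (s : K m) : inva m s = c0 m * s⁻¹ := rfl

noncomputable def pe : V m ≃ V m :=
  (Equiv.prodComm _ _).trans ((inva m).prodCongr (Equiv.refl _))

lemma pe_apply (r : V m) : pe m r = (inva m r.2, r.1) := rfl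

noncomputable def Had (t r : V m) : ℝ := chi (pr m t (pe m r))

lemma abs_Had (t r : V m) : |Had m t r| = 1 := abs_chi _

lemma Had_zero (r : V m) : Had m 0 r = 1 := by
  rw [Had, pr_zero_left, chi_zero]

lemma sum_Had (t t' : V m) :
    ∑ r : V m, Had m t r * Had m t' r
      = if t = t' then ((Fintype.card (K m) : ℝ)) ^ 2 else 0 := by
  classical
  have hmul : ∀ r, Had m t r * Had m t' r = chi (pr m (t + t') (pe m r)) := by
    intro r
    rw [Had, Had, ← chi_add, ← pr_add_left]
  simp only [hmul]
  rw [Equiv.sum_comp (pe m) (fun w => chi (pr m (t + t') w))]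
  split_ifs with h
  · subst h
    have ht : t + t = 0 := Prod.ext (char2_add_self m _) (char2_add_self m _)
    rw [ht]
    simp only [pr_zero_left, chi_zero, Finset.sum_const, card_univ, nsmul_eq_mul, mul_one]
    rw [Fintype.card_prod]
    push_cast
    ring
  · apply sum_chi_pr
    intro h0
    exact h (Prod.ext (char2_eq m (congrArg Prod.fst h0)) (char2_eq m (congrArg Prod.snd h0)))

noncomputable def qK : ℝ := (Fintype.card (K m) : ℝ)

lemma qK_pos : 0 < qK m := by
  have : 0 < Fintype.card (K m) := Fintype.card_pos
  unfold qK; exact_mod_cast this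

/-- the abstract dictionary -/
noncomputable def Dabs : V m × V m → Option (K m) × (V m × V m) → ℝ := fun rc p =>
  match p.1 with
  | some a => (qK m)⁻¹ * Had m p.2.2 rc.1 * (if rc.2 = p.2.1 + (a * rc.1.1, a * rc.1.2) then 1 else 0)
  | none   => (qK m)⁻¹ * Had m p.2.2 rc.2 * (if rc.1 = p.2.1 then 1 else 0)

lemma Dabs_some (rc : V m × V m) (a : K m) (it : V m × V m) :
    Dabs m rc (some a, it)
      = (qK m)⁻¹ * Had m it.2 rc.1 * (if rc.2 = it.1 + (a * rc.1.1, a * rc.1.2) then 1 else 0) := rfl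

lemma Dabs_none (rc : V m × V m) (it : V m × V m) :
    Dabs m rc (none, it)
      = (qK m)⁻¹ * Had m it.2 rc.2 * (if rc.1 = it.1 then 1 else 0) := rfl

lemma sum_Had' (t t' : V m) :
    ∑ r : V m, Had m t r * Had m t' r = if t = t' then (qK m) ^ 2 else 0 := sum_Had m t t'

/-- orthonormality inside a `some a` block -/
lemma gram_ss_same (a : K m) (it it' : V m × V m) :
    ∑ rc : V m × V m, Dabs m rc (some a, it) * Dabs m rc (some a, it')
      = if it = it' then 1 else 0 := by
  simp only [Dabs_some]
  rw [Fintype.sum_prod_type]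
  have hinner : ∀ r : V m,
      (∑ c : V m, ((qK m)⁻¹ * Had m it.2 r * (if c = it.1 + (a * r.1, a * r.2) then 1 else 0)) *
        ((qK m)⁻¹ * Had m it'.2 r * (if c = it'.1 + (a * r.1, a * r.2) then 1 else 0)))
      = if it.1 = it'.1 then ((qK m)⁻¹ * Had m it.2 r) * ((qK m)⁻¹ * Had m it'.2 r) else 0 := by
    intro r
    have hpt : ∀ c : V m,
        ((qK m)⁻¹ * Had m it.2 r * (if c = it.1 + (a * r.1, a * r.2) then 1 else 0)) *
        ((qK m)⁻¹ * Had m it'.2 r * (if c = it'.1 + (a * r.1, a * r.2) then 1 else 0))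
        = if c = it.1 + (a * r.1, a * r.2) then
            (if it.1 = it'.1 then ((qK m)⁻¹ * Had m it.2 r) * ((qK m)⁻¹ * Had m it'.2 r) else 0)
          else 0 := by
      intro c
      by_cases h1 : c = it.1 + (a * r.1, a * r.2)
      · subst h1
        by_cases h2 : it.1 = it'.1
        · simp [h2]
        · have h3 : ¬ (it.1 + (a * r.1, a * r.2) = it'.1 + (a * r.1, a * r.2)) := by
            intro h4; exact h2 (add_right_cancel h4)
          simp [h3, h2]
      · simp [h1]
    rw [Finset.sum_congr rfl (fun c _ => hpt c), Finset.sum_ite_eq' Finset.univ]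
    simp
  rw [Finset.sum_congr rfl (fun r _ => hinner r)]
  by_cases h : it.1 = it'.1
  · simp only [h, if_true]
    have : ∀ r : V m, ((qK m)⁻¹ * Had m it.2 r) * ((qK m)⁻¹ * Had m it'.2 r)
        = ((qK m)⁻¹ * (qK m)⁻¹) * (Had m it.2 r * Had m it'.2 r) := fun r => by ring
    rw [Finset.sum_congr rfl (fun r _ => this r), ← Finset.mul_sum, sum_Had']
    by_cases h2 : it.2 = it'.2
    · have : it = it' := Prod.ext h h2
      simp only [h2, if_true, this, if_true]
      have hne := (qK_pos m).ne'
      field_simp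
    · have : ¬ it = it' := fun hh => h2 (congrArg Prod.snd hh)
      simp [h2, this]
  · have : ¬ it = it' := fun hh => h (congrArg Prod.fst hh)
    simp [h, this]

/-- orthonormality inside the `none` block -/
lemma gram_nn (it it' : V m × V m) :
    ∑ rc : V m × V m, Dabs m rc (none, it) * Dabs m rc (none, it')
      = if it = it' then 1 else 0 := by
  simp only [Dabs_none]
  rw [Fintype.sum_prod_type]
  have hpt : ∀ r : V m,
      (∑ c : V m, ((qK m)⁻¹ * Had m it.2 c * (if r = it.1 then 1 else 0)) *
        ((qK m)⁻¹ * Had m it'.2 c * (if r = it'.1 then 1 else 0)))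
      = if r = it.1 then
          (if it.1 = it'.1 then ((qK m)⁻¹ * (qK m)⁻¹) * ∑ c : V m, Had m it.2 c * Had m it'.2 c else 0)
        else 0 := by
    intro r
    by_cases h1 : r = it.1
    · subst h1
      by_cases h2 : it.1 = it'.1
      · have e1 : ∀ c : V m, ((qK m)⁻¹ * Had m it.2 c * (if (it.1 : V m) = it.1 then (1:ℝ) else 0)) *
            ((qK m)⁻¹ * Had m it'.2 c * (if it.1 = it'.1 then 1 else 0))
            = (qK m)⁻¹ * (qK m)⁻¹ * (Had m it.2 c * Had m it'.2 c) := by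
          intro c; rw [if_pos rfl, if_pos h2]; ring
        rw [Finset.sum_congr rfl (fun c _ => e1 c), if_pos rfl, if_pos h2, Finset.mul_sum]
      · have h3 : ¬ (it.1 = it'.1) := h2
        simp [h3, Ne.symm h3]
    · simp [h1]
  rw [Finset.sum_congr rfl (fun r _ => hpt r), Finset.sum_ite_eq' Finset.univ]
  simp only [mem_univ, if_true]
  by_cases h : it.1 = it'.1
  · simp only [h, if_true]
    rw [sum_Had']
    by_cases h2 : it.2 = it'.2
    · have : it = it' := Prod.ext h h2
      simp only [h2, if_true, this, if_true]
      have hne := (qK_pos m).ne'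
      field_simp
    · have : ¬ it = it' := fun hh => h2 (congrArg Prod.snd hh)
      simp [h2, this]
  · have : ¬ it = it' := fun hh => h (congrArg Prod.fst hh)
    simp [h, this]

lemma two_eq_zeroK : (2 : K m) = 0 := CharTwo.two_eq_zero

/-- solving `i + a•r = i' + a'•r` for `r` when `a ≠ a'` -/
lemma solve_r {a a' : K m} (h : a ≠ a') (i i' : V m) (r : V m) :
    (i + (a * r.1, a * r.2) = i' + (a' * r.1, a' * r.2))
      ↔ r = ((a + a')⁻¹ * (i.1 + i'.1), (a + a')⁻¹ * (i.2 + i'.2)) := by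
  have hu : a + a' ≠ 0 := fun h0 => h (char2_eq m h0)
  have h2 := two_eq_zeroK m
  constructor
  · intro hEq
    rw [Prod.ext_iff] at hEq
    obtain ⟨h1', h2'⟩ := hEq
    simp only [Prod.fst_add, Prod.snd_add] at h1' h2'
    apply Prod.ext
    · show r.1 = (a + a')⁻¹ * (i.1 + i'.1)
      field_simp
      linear_combination h1' + (a' * r.1 - i.1) * h2
    · show r.2 = (a + a')⁻¹ * (i.2 + i'.2)
      field_simp
      linear_combination h2' + (a' * r.2 - i.2) * h2
  · intro hr
    subst hr
    apply Prod.ext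
    · show i.1 + a * ((a + a')⁻¹ * (i.1 + i'.1)) = i'.1 + a' * ((a + a')⁻¹ * (i.1 + i'.1))
      field_simp
      linear_combination (i.1 * a' - i'.1 * a' + i.1 * a - i.1 * a') * h2
    · show i.2 + a * ((a + a')⁻¹ * (i.2 + i'.2)) = i'.2 + a' * ((a + a')⁻¹ * (i.2 + i'.2))
      field_simp
      linear_combination (i.2 * a' - i'.2 * a' + i.2 * a - i.2 * a') * h2

/-- cross coherence between two distinct `some` blocks -/
lemma gram_ss_ne {a a' : K m} (h : a ≠ a') (it it' : V m × V m) :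
    ∑ rc : V m × V m, Dabs m rc (some a, it) * Dabs m rc (some a', it')
      = (qK m)⁻¹ * (qK m)⁻¹ *
        (Had m it.2 ((a + a')⁻¹ * (it.1.1 + it'.1.1), (a + a')⁻¹ * (it.1.2 + it'.1.2)) *
         Had m it'.2 ((a + a')⁻¹ * (it.1.1 + it'.1.1), (a + a')⁻¹ * (it.1.2 + it'.1.2))) := by
  set rs : V m := ((a + a')⁻¹ * (it.1.1 + it'.1.1), (a + a')⁻¹ * (it.1.2 + it'.1.2)) with hrs
  simp only [Dabs_some]
  rw [Fintype.sum_prod_type]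
  have hinner : ∀ r : V m,
      (∑ c : V m, ((qK m)⁻¹ * Had m it.2 r * (if c = it.1 + (a * r.1, a * r.2) then 1 else 0)) *
        ((qK m)⁻¹ * Had m it'.2 r * (if c = it'.1 + (a' * r.1, a' * r.2) then 1 else 0)))
      = if r = rs then ((qK m)⁻¹ * Had m it.2 r) * ((qK m)⁻¹ * Had m it'.2 r) else 0 := by
    intro r
    have hpt : ∀ c : V m,
        ((qK m)⁻¹ * Had m it.2 r * (if c = it.1 + (a * r.1, a * r.2) then 1 else 0)) *
        ((qK m)⁻¹ * Had m it'.2 r * (if c = it'.1 + (a' * r.1, a' * r.2) then 1 else 0))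
        = if c = it.1 + (a * r.1, a * r.2) then
            (if it.1 + (a * r.1, a * r.2) = it'.1 + (a' * r.1, a' * r.2) then
              ((qK m)⁻¹ * Had m it.2 r) * ((qK m)⁻¹ * Had m it'.2 r) else 0)
          else 0 := by
      intro c
      by_cases h1 : c = it.1 + (a * r.1, a * r.2)
      · subst h1
        by_cases h2 : it.1 + (a * r.1, a * r.2) = it'.1 + (a' * r.1, a' * r.2) <;> simp [h2]
      · simp [h1]
    rw [Finset.sum_congr rfl (fun c _ => hpt c), Finset.sum_ite_eq' Finset.univ]
    simp only [mem_univ, if_true]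
    rw [if_congr (solve_r m h it.1 it'.1 r) rfl rfl]
  rw [Finset.sum_congr rfl (fun r _ => hinner r), Finset.sum_ite_eq' Finset.univ]
  simp only [mem_univ, if_true]
  ring

/-- cross coherence between a `some` block and the `none` block -/
lemma gram_sn (a : K m) (it it' : V m × V m) :
    ∑ rc : V m × V m, Dabs m rc (some a, it) * Dabs m rc (none, it')
      = (qK m)⁻¹ * (qK m)⁻¹ *
        (Had m it.2 it'.1 *
         Had m it'.2 (it.1.1 + a * it'.1.1, it.1.2 + a * it'.1.2)) := by
  simp only [Dabs_some, Dabs_none]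
  rw [Fintype.sum_prod_type]
  have hinner : ∀ r : V m,
      (∑ c : V m, ((qK m)⁻¹ * Had m it.2 r * (if c = it.1 + (a * r.1, a * r.2) then 1 else 0)) *
        ((qK m)⁻¹ * Had m it'.2 c * (if r = it'.1 then 1 else 0)))
      = if r = it'.1 then
          ((qK m)⁻¹ * Had m it.2 r) * ((qK m)⁻¹ * Had m it'.2 (it.1 + (a * r.1, a * r.2)))
        else 0 := by
    intro r
    have hpt : ∀ c : V m,
        ((qK m)⁻¹ * Had m it.2 r * (if c = it.1 + (a * r.1, a * r.2) then 1 else 0)) *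
        ((qK m)⁻¹ * Had m it'.2 c * (if r = it'.1 then 1 else 0))
        = if c = it.1 + (a * r.1, a * r.2) then
            (if r = it'.1 then
              ((qK m)⁻¹ * Had m it.2 r) * ((qK m)⁻¹ * Had m it'.2 (it.1 + (a * r.1, a * r.2)))
             else 0)
          else 0 := by
      intro c
      by_cases h1 : c = it.1 + (a * r.1, a * r.2)
      · subst h1
        by_cases h2 : r = it'.1 <;> simp [h2]
      · simp [h1]
    rw [Finset.sum_congr rfl (fun c _ => hpt c), Finset.sum_ite_eq' Finset.univ]
    simp
  rw [Finset.sum_congr rfl (fun r _ => hinner r), Finset.sum_ite_eq' Finset.univ]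
  simp only [mem_univ, if_true]
  have : it.1 + (a * (it'.1).1, a * (it'.1).2) = (it.1.1 + a * it'.1.1, it.1.2 + a * it'.1.2) := by
    apply Prod.ext <;> simp
  rw [this]
  ring

/-- the sparse null vector -/
noncomputable def xabs : Option (K m) × (V m × V m) → ℝ := fun p =>
  match p.1 with
  | some a => if p.2.1.2 = a * a ∧ p.2.2 = (a, 0) then 1 else 0
  | none => if p.2.1.2 = 0 ∧ p.2.2 = 0 then -1 else 0

lemma xabs_some (a : K m) (it : V m × V m) :
    xabs m (some a, it) = if it.1.2 = a * a ∧ it.2 = (a, 0) then 1 else 0 := rfl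

lemma xabs_none (it : V m × V m) :
    xabs m (none, it) = if it.1.2 = 0 ∧ it.2 = 0 then -1 else 0 := rfl

lemma vv_zero (v : V m) : v + v = 0 := Prod.ext (char2_add_self m _) (char2_add_self m _)

lemma swap_add {x y v : V m} : x = y + v ↔ y = x + v := by
  constructor <;> intro h <;> subst h <;> rw [add_assoc, vv_zero, add_zero]

lemma Had_a0 (a : K m) (r : V m) : Had m (a, 0) r = chi (bee m a (c0 m * r.2⁻¹)) := by
  rw [Had, pe_apply, pr]
  simp [bee_zero_left, inva_apply]

/-- the key character sum -/
lemma charSum (r : V m) (z : K m) :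
    ∑ a : K m, Had m (a, 0) r * (if z + a * r.2 = a * a then 1 else 0)
      = if r.2 = 0 then 1 else 0 := by
  rcases eq_or_ne r.2 0 with hr | hr
  · rw [if_pos hr]
    have hpt : ∀ a : K m, Had m (a, 0) r * (if z + a * r.2 = a * a then 1 else 0)
        = if a = (sqE m).symm z then 1 else 0 := by
      intro a
      have h1 : Had m (a, 0) r = 1 := by
        rw [Had_a0, hr]
        simp [bee_zero_left, chi_zero, bee]
      rw [h1, one_mul, hr, mul_zero, add_zero]
      have h2 : (z = a * a) ↔ (a = (sqE m).symm z) := by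
        rw [eq_comm, show a * a = sqE m a from rfl, ← Equiv.eq_symm_apply]
      exact if_congr h2 rfl rfl
    rw [Finset.sum_congr rfl (fun a _ => hpt a), Finset.sum_ite_eq' Finset.univ]
    simp
  · rw [if_neg hr]
    set s := r.2 with hs
    have h2 := two_eq_zeroK m
    have hflip : ∀ a : K m, Had m (a + s, 0) r * (if z + (a + s) * r.2 = (a + s) * (a + s) then 1 else 0)
        = - (Had m (a, 0) r * (if z + a * r.2 = a * a then 1 else 0)) := by
      intro a
      have hH : Had m (a + s, 0) r = - Had m (a, 0) r := by
        rw [Had_a0, Had_a0, bee_add_left, chi_add]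
        have : bee m s (c0 m * r.2⁻¹) = 1 := by
          rw [bee, ← hs, show s * (c0 m * s⁻¹) = c0 m by field_simp, lam_c0]
        rw [this]
        simp [chi]
      have hcond : (z + (a + s) * r.2 = (a + s) * (a + s)) ↔ (z + a * r.2 = a * a) := by
        rw [← hs]
        constructor <;> intro hc
        · linear_combination hc + a * s * h2
        · linear_combination hc - a * s * h2
      rw [hH, if_congr hcond rfl rfl]
      ring
    have hsum : ∑ a : K m, Had m (a, 0) r * (if z + a * r.2 = a * a then 1 else 0)
        = ∑ a : K m, Had m (a + s, 0) r * (if z + (a + s) * r.2 = (a + s) * (a + s) then 1 else 0) :=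
      (Fintype.sum_equiv (Equiv.addRight s)
        (fun a => Had m (a + s, 0) r * (if z + (a + s) * r.2 = (a + s) * (a + s) then 1 else 0))
        (fun a => Had m (a, 0) r * (if z + a * r.2 = a * a then 1 else 0))
        (fun a => rfl)).symm
  -- hsum : LHS = shifted; hflip : shifted = -LHS
    have : ∑ a : K m, Had m (a, 0) r * (if z + a * r.2 = a * a then 1 else 0)
        = - ∑ a : K m, Had m (a, 0) r * (if z + a * r.2 = a * a then 1 else 0) := by
      calc ∑ a : K m, Had m (a, 0) r * (if z + a * r.2 = a * a then 1 else 0)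
          = ∑ a : K m, Had m (a + s, 0) r * (if z + (a + s) * r.2 = (a + s) * (a + s) then 1 else 0) := hsum
        _ = ∑ a : K m, - (Had m (a, 0) r * (if z + a * r.2 = a * a then 1 else 0)) :=
            Finset.sum_congr rfl (fun a _ => hflip a)
        _ = - ∑ a : K m, Had m (a, 0) r * (if z + a * r.2 = a * a then 1 else 0) := by
            rw [Finset.sum_neg_distrib]
    linarith

lemma null_some (rc : V m × V m) (a : K m) :
    ∑ it : V m × V m, Dabs m rc (some a, it) * xabs m (some a, it)
      = (qK m)⁻¹ * (Had m (a, 0) rc.1 * (if rc.2.2 + a * rc.1.2 = a * a then 1 else 0)) := by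
  simp only [Dabs_some, xabs_some]
  rw [Fintype.sum_prod_type]
  have hinner : ∀ i : V m,
      (∑ t : V m, ((qK m)⁻¹ * Had m t rc.1 * (if rc.2 = i + (a * rc.1.1, a * rc.1.2) then 1 else 0)) *
        (if i.2 = a * a ∧ t = (a, 0) then 1 else 0))
      = if i = rc.2 + (a * rc.1.1, a * rc.1.2) then
          ((qK m)⁻¹ * Had m (a, 0) rc.1 * (if i.2 = a * a then 1 else 0)) else 0 := by
    intro i
    have hpt : ∀ t : V m,
        ((qK m)⁻¹ * Had m t rc.1 * (if rc.2 = i + (a * rc.1.1, a * rc.1.2) then 1 else 0)) *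
        (if i.2 = a * a ∧ t = (a, 0) then 1 else 0)
        = if t = (a, 0) then
            (if i = rc.2 + (a * rc.1.1, a * rc.1.2) then
              ((qK m)⁻¹ * Had m (a, 0) rc.1 * (if i.2 = a * a then 1 else 0)) else 0)
          else 0 := by
      intro t
      by_cases h1 : t = (a, 0)
      · subst h1
        rw [if_pos rfl]
        rw [if_congr (swap_add m) rfl rfl]
        by_cases h2 : i = rc.2 + (a * rc.1.1, a * rc.1.2) <;>
          by_cases h3 : i.2 = a * a <;> simp [h2, h3]
      · simp [h1]
    rw [Finset.sum_congr rfl (fun t _ => hpt t), Finset.sum_ite_eq' Finset.univ]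
    simp
  rw [Finset.sum_congr rfl (fun i _ => hinner i), Finset.sum_ite_eq' Finset.univ]
  simp only [mem_univ, if_true, Prod.snd_add]
  ring

lemma null_none (rc : V m × V m) :
    ∑ it : V m × V m, Dabs m rc (none, it) * xabs m (none, it)
      = (qK m)⁻¹ * (if rc.1.2 = 0 then -1 else 0) := by
  simp only [Dabs_none, xabs_none]
  rw [Fintype.sum_prod_type]
  have hinner : ∀ i : V m,
      (∑ t : V m, ((qK m)⁻¹ * Had m t rc.2 * (if rc.1 = i then 1 else 0)) *
        (if i.2 = 0 ∧ t = 0 then -1 else 0))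
      = if i = rc.1 then ((qK m)⁻¹ * (if i.2 = 0 then -1 else 0)) else 0 := by
    intro i
    have hpt : ∀ t : V m,
        ((qK m)⁻¹ * Had m t rc.2 * (if rc.1 = i then 1 else 0)) *
        (if i.2 = 0 ∧ t = 0 then -1 else 0)
        = if t = 0 then
            (if i = rc.1 then ((qK m)⁻¹ * (if i.2 = 0 then -1 else 0)) else 0)
          else 0 := by
      intro t
      by_cases h1 : t = 0
      · subst h1
        rw [if_pos rfl, Had_zero]
        by_cases h2 : i = rc.1 <;> by_cases h3 : i.2 = 0 <;>
          simp [h2, h3, eq_comm]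
      · simp [h1]
    rw [Finset.sum_congr rfl (fun t _ => hpt t), Finset.sum_ite_eq' Finset.univ]
    simp
  rw [Finset.sum_congr rfl (fun i _ => hinner i), Finset.sum_ite_eq' Finset.univ]
  simp

/-- the null-vector identity -/
lemma null_total (rc : V m × V m) :
    ∑ p : Option (K m) × (V m × V m), Dabs m rc p * xabs m p = 0 := by
  rw [Fintype.sum_prod_type, Fintype.sum_option]
  rw [null_none]
  rw [Finset.sum_congr rfl (fun a _ => null_some m rc a)]
  rw [← Finset.mul_sum]
  have := charSum m rc.1 rc.2.2
  rw [this]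
  by_cases h : rc.1.2 = 0 <;> simp [h]

lemma count_aux (P : V m → Prop) [DecidablePred P] (t0 : V m) :
    (∑ it : V m × V m, if (P it.1 ∧ it.2 = t0) then (1 : ℕ) else 0)
      = (univ.filter (fun i : V m => P i)).card := by
  rw [Fintype.sum_prod_type]
  have hinner : ∀ i : V m, (∑ t : V m, if (P i ∧ t = t0) then (1 : ℕ) else 0)
      = if P i then 1 else 0 := by
    intro i
    by_cases h : P i
    · simp only [h, true_and]
      rw [Finset.sum_ite_eq' Finset.univ]
      simp
    · simp [h]
  rw [Finset.sum_congr rfl (fun i _ => hinner i)]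
  rw [Finset.card_filter]

lemma count_snd_eq (z : K m) :
    (univ.filter (fun i : V m => i.2 = z)).card = Fintype.card (K m) := by
  have : (univ.filter (fun i : V m => i.2 = z)) = univ ×ˢ {z} := by
    ext i
    simp only [Finset.mem_filter, Finset.mem_product, Finset.mem_univ, Finset.mem_singleton,
      true_and]
  rw [this]
  simp [Finset.card_product]

/-- support size of the null vector -/
lemma xabs_card :
    (univ.filter fun p => xabs m p ≠ 0).card
      = Fintype.card (K m) * Fintype.card (K m) + Fintype.card (K m) := by
  rw [Finset.card_filter]
  rw [Fintype.sum_prod_type, Fintype.sum_option]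
  have hnone : (∑ it : V m × V m, if xabs m (none, it) ≠ 0 then (1:ℕ) else 0)
      = Fintype.card (K m) := by
    have hpt : ∀ it : V m × V m, (if xabs m (none, it) ≠ 0 then (1:ℕ) else 0)
        = if (it.1.2 = 0 ∧ it.2 = 0) then 1 else 0 := by
      intro it
      rw [xabs_none]
      by_cases h : it.1.2 = 0 ∧ it.2 = 0 <;> simp [h]
    rw [Finset.sum_congr rfl (fun it _ => hpt it), count_aux m (fun i => i.2 = 0) 0,
      count_snd_eq]
  have hsome : ∀ a : K m, (∑ it : V m × V m, if xabs m (some a, it) ≠ 0 then (1:ℕ) else 0)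
      = Fintype.card (K m) := by
    intro a
    have hpt : ∀ it : V m × V m, (if xabs m (some a, it) ≠ 0 then (1:ℕ) else 0)
        = if (it.1.2 = a * a ∧ it.2 = (a, 0)) then 1 else 0 := by
      intro it
      rw [xabs_some]
      by_cases h : it.1.2 = a * a ∧ it.2 = (a, 0) <;> simp [h]
    rw [Finset.sum_congr rfl (fun it _ => hpt it), count_aux m (fun i => i.2 = a * a) (a, 0),
      count_snd_eq]
  rw [hnone, Finset.sum_congr rfl (fun a _ => hsome a), Finset.sum_const, card_univ,
    smul_eq_mul]
  ring

lemma xabs_ne_zero : xabs m ≠ 0 := by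
  intro h
  have := congrFun h (none, (0, 0))
  rw [xabs_none] at this
  simp at this

/-- generic spark lower bound for a union of `q+1` orthonormal bases with coherence `1/q²` -/
lemma spark_lower {q n : ℕ} (hq : 0 < q) (D : Fin n → (Fin (q + 1) × Fin n) → ℝ)
    (h1 : ∀ b : Fin (q + 1), ∀ c c' : Fin n,
      (∑ r, D r (b, c) * D r (b, c')) = if c = c' then 1 else 0)
    (h2 : ∀ p p' : Fin (q + 1) × Fin n, p ≠ p' →
      |∑ r, D r p * D r p'| ≤ 1 / (q : ℝ) ^ 2)
    (x : (Fin (q + 1) × Fin n) → ℝ) (hx : x ≠ 0)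
    (hnull : ∀ r, ∑ c, D r c * x c = 0) :
    q ^ 2 + q ≤ (univ.filter fun c => x c ≠ 0).card := by
  classical
  set G : (Fin (q + 1) × Fin n) → (Fin (q + 1) × Fin n) → ℝ :=
    fun p p' => ∑ r, D r p * D r p' with hGdef
  have hq0 : (0 : ℝ) < q := by exact_mod_cast hq
  have hq2 : (0 : ℝ) < (q : ℝ) ^ 2 := by positivity
  -- Gram identity applied to the null vector
  have hG : ∀ p, ∑ p', G p p' * x p' = 0 := by
    intro p
    have : ∀ p', G p p' * x p' = ∑ r, D r p * (D r p' * x p') := by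
      intro p'
      rw [hGdef]
      rw [Finset.sum_mul]
      exact Finset.sum_congr rfl (fun r _ => by ring)
    rw [Finset.sum_congr rfl (fun p' _ => this p'), Finset.sum_comm]
    have : ∀ r, ∑ p', D r p * (D r p' * x p') = 0 := by
      intro r
      rw [← Finset.mul_sum]
      have := hnull r
      rw [show ∑ c, D r c * x c = ∑ p', D r p' * x p' from rfl] at this
      rw [this, mul_zero]
    exact Finset.sum_eq_zero (fun r _ => this r)
  set N : Fin (q + 1) → ℝ := fun b => ∑ c, |x (b, c)| with hNdef
  set S : ℝ := ∑ p : Fin (q + 1) × Fin n, |x p| with hSdef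
  have hSN : S = ∑ b, N b := by rw [hSdef, Fintype.sum_prod_type]
  set k : Fin (q + 1) → ℕ := fun b => (univ.filter fun c => x (b, c) ≠ 0).card with hkdef
  have hNnonneg : ∀ b, 0 ≤ N b := fun b => Finset.sum_nonneg (fun c _ => abs_nonneg _)
  -- step 1
  have step1 : ∀ p : Fin (q + 1) × Fin n, |x p| ≤ 1 / (q : ℝ) ^ 2 * (S - N p.1) := by
    intro p
    have hsplit := hG p
    rw [Fintype.sum_prod_type] at hsplit
    set T : Fin (q + 1) → ℝ := fun b' => ∑ c', G p (b', c') * x (b', c') with hTdef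
    have hTp : T p.1 = x p := by
      rw [hTdef]
      have hpt : ∀ c', G p (p.1, c') * x (p.1, c')
          = if c' = p.2 then x (p.1, c') else 0 := by
        intro c'
        have : G p (p.1, c') = if p.2 = c' then 1 else 0 := h1 p.1 p.2 c'
        rw [this]
        by_cases h : p.2 = c'
        · simp [h]
        · simp [h, Ne.symm h]
      simp only
      rw [Finset.sum_congr rfl (fun c' _ => hpt c'), Finset.sum_ite_eq' Finset.univ]
      simp
    have hsum : T p.1 + ∑ b' ∈ univ.erase p.1, T b' = ∑ b', T b' :=
      Finset.add_sum_erase univ T (mem_univ p.1)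
    have hxp : x p = - ∑ b' ∈ univ.erase p.1, T b' := by
      have : ∑ b', T b' = 0 := hsplit
      rw [← hTp]; linarith [hsum, this]
    have hTb : ∀ b' ∈ univ.erase p.1, |T b'| ≤ 1 / (q : ℝ) ^ 2 * N b' := by
      intro b' hb'
      have hbne : b' ≠ p.1 := (Finset.mem_erase.mp hb').1
      rw [hTdef]
      calc |∑ c', G p (b', c') * x (b', c')| ≤ ∑ c', |G p (b', c') * x (b', c')| :=
            Finset.abs_sum_le_sum_abs _ _
        _ ≤ ∑ c', 1 / (q : ℝ) ^ 2 * |x (b', c')| := by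
            apply Finset.sum_le_sum
            intro c' _
            rw [abs_mul]
            apply mul_le_mul_of_nonneg_right _ (abs_nonneg _)
            apply h2
            intro hcontra
            exact hbne (by rw [hcontra])
        _ = 1 / (q : ℝ) ^ 2 * N b' := by rw [← Finset.mul_sum, hNdef]
    calc |x p| = |∑ b' ∈ univ.erase p.1, T b'| := by rw [hxp, abs_neg]
      _ ≤ ∑ b' ∈ univ.erase p.1, |T b'| := Finset.abs_sum_le_sum_abs _ _
      _ ≤ ∑ b' ∈ univ.erase p.1, 1 / (q : ℝ) ^ 2 * N b' := Finset.sum_le_sum hTb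
      _ = 1 / (q : ℝ) ^ 2 * ∑ b' ∈ univ.erase p.1, N b' := by rw [Finset.mul_sum]
      _ = 1 / (q : ℝ) ^ 2 * (S - N p.1) := by
          rw [Finset.sum_erase_eq_sub (mem_univ p.1), hSN]
  -- step 2
  have step2 : ∀ b, N b ≤ (k b : ℝ) * (1 / (q : ℝ) ^ 2 * (S - N b)) := by
    intro b
    have hfil : N b = ∑ c ∈ univ.filter (fun c => x (b, c) ≠ 0), |x (b, c)| := by
      rw [hNdef]
      exact (Finset.sum_filter_of_ne (fun c _ h => by
        intro h0; exact h (by rw [h0, abs_zero]))).symm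
    calc N b = ∑ c ∈ univ.filter (fun c => x (b, c) ≠ 0), |x (b, c)| := hfil
      _
        ≤ ∑ c ∈ univ.filter (fun c => x (b, c) ≠ 0), 1 / (q : ℝ) ^ 2 * (S - N b) :=
          Finset.sum_le_sum (fun c _ => step1 (b, c))
      _ = (k b : ℝ) * (1 / (q : ℝ) ^ 2 * (S - N b)) := by
          rw [Finset.sum_const, hkdef, nsmul_eq_mul]
  -- step 3
  have step3 : ∀ b, (q : ℝ) ^ 2 * S ≤ ((q : ℝ) ^ 2 + (k b : ℝ)) * (S - N b) := by
    intro b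
    have h := step2 b
    have h' : (q : ℝ) ^ 2 * N b ≤ (k b : ℝ) * (S - N b) := by
      have := mul_le_mul_of_nonneg_left h (le_of_lt hq2)
      calc (q : ℝ) ^ 2 * N b ≤ (q : ℝ) ^ 2 * ((k b : ℝ) * (1 / (q : ℝ) ^ 2 * (S - N b))) := this
        _ = (k b : ℝ) * (S - N b) := by field_simp
    nlinarith [h']
  -- step 4
  have step4 : 0 < S := by
    obtain ⟨p0, hp0⟩ := Function.ne_iff.mp hx
    rw [hSdef]
    apply Finset.sum_pos' (fun p _ => abs_nonneg _)
    exact ⟨p0, mem_univ _, abs_pos.mpr hp0⟩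
  -- step 5
  have step5 : ∀ b, 0 < S - N b := by
    intro b
    by_contra hle
    push_neg at hle
    have hb : (0 : ℝ) < (q : ℝ) ^ 2 + (k b : ℝ) := by positivity
    have h3 := step3 b
    nlinarith [mul_nonneg (le_of_lt hb) (neg_nonneg.mpr hle)]
  -- Cauchy-Schwarz
  set T : ℝ := ∑ b, (S - N b)⁻¹ with hTdef2
  have hT0 : 0 ≤ T := Finset.sum_nonneg (fun b _ => le_of_lt (inv_pos.mpr (step5 b)))
  have step6 : ((q : ℝ) + 1) ^ 2 ≤ (∑ b, (S - N b)) * T := by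
    have hcs := Finset.sum_mul_sq_le_sq_mul_sq univ
      (fun b => Real.sqrt (S - N b)) (fun b => (Real.sqrt (S - N b))⁻¹)
    have hL : (∑ b, Real.sqrt (S - N b) * (Real.sqrt (S - N b))⁻¹) = ((q : ℝ) + 1) := by
      have : ∀ b : Fin (q + 1), Real.sqrt (S - N b) * (Real.sqrt (S - N b))⁻¹ = 1 := by
        intro b
        exact mul_inv_cancel₀ (ne_of_gt (Real.sqrt_pos.mpr (step5 b)))
      rw [Finset.sum_congr rfl (fun b _ => this b), Finset.sum_const, card_univ]
      simp
    have hR1 : (∑ b, Real.sqrt (S - N b) ^ 2) = ∑ b, (S - N b) :=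
      Finset.sum_congr rfl (fun b _ => Real.sq_sqrt (le_of_lt (step5 b)))
    have hR2 : (∑ b, ((Real.sqrt (S - N b))⁻¹) ^ 2) = T := by
      rw [hTdef2]
      apply Finset.sum_congr rfl
      intro b _
      rw [inv_pow, Real.sq_sqrt (le_of_lt (step5 b))]
    rw [hL, hR1, hR2] at hcs
    exact hcs
  have step7 : (∑ b, (S - N b)) = (q : ℝ) * S := by
    rw [Finset.sum_sub_distrib, Finset.sum_const, card_univ, ← hSN]
    simp
    ring
  -- step 8 and sum
  have step8 : (q : ℝ) ^ 2 * S * T ≤ ((q : ℝ) + 1) * (q : ℝ) ^ 2 + ∑ b, (k b : ℝ) := by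
    have hpt : ∀ b : Fin (q + 1), (q : ℝ) ^ 2 * S * (S - N b)⁻¹ ≤ (q : ℝ) ^ 2 + (k b : ℝ) := by
      intro b
      have hσ := step5 b
      have hd : ((q : ℝ) ^ 2 * S) / (S - N b) ≤ (q : ℝ) ^ 2 + (k b : ℝ) :=
        (div_le_iff₀ hσ).mpr (step3 b)
      rw [← div_eq_mul_inv]
      exact hd
    calc (q : ℝ) ^ 2 * S * T = ∑ b, (q : ℝ) ^ 2 * S * (S - N b)⁻¹ := by
          rw [hTdef2, Finset.mul_sum]
      _ ≤ ∑ b, ((q : ℝ) ^ 2 + (k b : ℝ)) := Finset.sum_le_sum (fun b _ => hpt b)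
      _ = ((q : ℝ) + 1) * (q : ℝ) ^ 2 + ∑ b, (k b : ℝ) := by
          rw [Finset.sum_add_distrib, Finset.sum_const, card_univ, Fintype.card_fin,
            nsmul_eq_mul]
          push_cast
          ring
  -- combine
  have hKreal : (q : ℝ) * ((q : ℝ) + 1) ≤ ∑ b, (k b : ℝ) := by
    have h6 : ((q : ℝ) + 1) ^ 2 ≤ (q : ℝ) * (S * T) := by
      have := step6
      rw [step7] at this
      linarith [this, mul_assoc (q : ℝ) S T]
    have h8 : (q : ℝ) ^ 2 * (S * T) ≤ ((q : ℝ) + 1) * (q : ℝ) ^ 2 + ∑ b, (k b : ℝ) := by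
      have := step8
      nlinarith [this]
    nlinarith [h6, h8, hq0]
  -- conclude in ℕ
  have hcard : (univ.filter fun c => x c ≠ 0).card = ∑ b, k b := by
    rw [Finset.card_filter, Fintype.sum_prod_type]
    exact Finset.sum_congr rfl (fun b _ => (Finset.card_filter _ _).symm)
  have hfin : ((q ^ 2 + q : ℕ) : ℝ) ≤ ((∑ b, k b : ℕ) : ℝ) := by
    push_cast
    nlinarith [hKreal]
  rw [hcard]
  exact_mod_cast hfin

lemma filter_card_equiv {α β : Type*} [Fintype α] [Fintype β] (e : α ≃ β) (P : β → Prop)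
    [DecidablePred P] [DecidablePred (fun a => P (e a))] :
    (univ.filter fun a => P (e a)).card = (univ.filter P).card := by
  apply Finset.card_bij (fun a _ => e a)
  · intro a ha
    simp only [Finset.mem_filter, Finset.mem_univ, true_and] at ha ⊢
    exact ha
  · intro a1 _ a2 _ h
    exact e.injective h
  · intro b hb
    simp only [Finset.mem_filter, Finset.mem_univ, true_and] at hb
    exact ⟨e.symm b, by simp only [Finset.mem_filter, Finset.mem_univ, true_and,
      Equiv.apply_symm_apply]; exact hb, by simp⟩

lemma card_K (hm : 0 < m) : Fintype.card (K m) = 2 ^ m := by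
  have := GaloisField.card 2 m hm.ne'
  rwa [Nat.card_eq_fintype_card] at this

end TightDict

open TightDict Finset
open scoped Classical

/-- For every `q = 2^m` there is a dictionary `D ∈ R^{q⁴ × q⁴(q+1)}`, a union of
`q+1` orthonormal bases of `R^{q⁴}`, with mutual coherence `μ(D) = 1/q²` and spark
`η(D) = q² + q`; hence `η(D)·μ(D) = 1 + 1/q` while `η(D) > 1 + 1/μ(D)`: the
Gribonval–Nielsen bound is tight and strictly sharper than the general bound here. -/
theorem tight_dictionary_exists_square (m : ℕ) (hm : 0 < m) :
    ∃ D : Fin ((2 ^ m) ^ 4) → (Fin (2 ^ m + 1) × Fin ((2 ^ m) ^ 4)) → ℝ,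
      -- union of q+1 orthonormal bases
      (∀ b : Fin (2 ^ m + 1), ∀ c c' : Fin ((2 ^ m) ^ 4),
        (∑ r, D r (b, c) * D r (b, c')) = if c = c' then 1 else 0) ∧
      -- mutual coherence μ(D) = 1/q²
      (∀ p p' : Fin (2 ^ m + 1) × Fin ((2 ^ m) ^ 4), p ≠ p' →
        |∑ r, D r p * D r p'| ≤ 1 / ((2 ^ m : ℝ) ^ 2)) ∧
      (∃ p p' : Fin (2 ^ m + 1) × Fin ((2 ^ m) ^ 4), p ≠ p' ∧
        |∑ r, D r p * D r p'| = 1 / ((2 ^ m : ℝ) ^ 2)) ∧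
      -- spark η(D) = q² + q
      (∃ x : (Fin (2 ^ m + 1) × Fin ((2 ^ m) ^ 4)) → ℝ, x ≠ 0 ∧
        (∀ r, ∑ c, D r c * x c = 0) ∧
        (Finset.univ.filter fun c => x c ≠ 0).card = (2 ^ m) ^ 2 + 2 ^ m) ∧
      (∀ x : (Fin (2 ^ m + 1) × Fin ((2 ^ m) ^ 4)) → ℝ, x ≠ 0 →
        (∀ r, ∑ c, D r c * x c = 0) →
        (2 ^ m) ^ 2 + 2 ^ m ≤ (Finset.univ.filter fun c => x c ≠ 0).card) := by
  classical
  have hcK : Fintype.card (K m) = 2 ^ m := card_K m hm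
  have hcB : Fintype.card (Option (K m)) = 2 ^ m + 1 := by
    rw [Fintype.card_option, hcK]
  have hcV : Fintype.card (V m × V m) = (2 ^ m) ^ 4 := by
    rw [Fintype.card_prod, Fintype.card_prod, hcK]
    ring
  set eB : Fin (2 ^ m + 1) ≃ Option (K m) := (Fintype.equivFinOfCardEq hcB).symm with heB
  set eC : Fin ((2 ^ m) ^ 4) ≃ (V m × V m) := (Fintype.equivFinOfCardEq hcV).symm with heC
  set D : Fin ((2 ^ m) ^ 4) → (Fin (2 ^ m + 1) × Fin ((2 ^ m) ^ 4)) → ℝ :=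
    fun r p => Dabs m (eC r) (eB p.1, eC p.2) with hD
  have hqK : qK m = ((2 ^ m : ℕ) : ℝ) := by rw [qK, hcK]
  have hμ : (qK m)⁻¹ * (qK m)⁻¹ = 1 / ((2 ^ m : ℝ) ^ 2) := by
    rw [hqK]
    push_cast
    rw [one_div, ← mul_inv, ← pow_two]
  have hq2pos : (0 : ℝ) < (2 ^ m : ℝ) ^ 2 := by positivity
  -- clause 1 : orthonormal bases
  have clause1 : ∀ b : Fin (2 ^ m + 1), ∀ c c' : Fin ((2 ^ m) ^ 4),
      (∑ r, D r (b, c) * D r (b, c')) = if c = c' then 1 else 0 := by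
    intro b c c'
    have e1 : (∑ r, D r (b, c) * D r (b, c'))
        = ∑ rc : V m × V m, Dabs m rc (eB b, eC c) * Dabs m rc (eB b, eC c') :=
      Fintype.sum_equiv eC _ _ (fun r => rfl)
    rw [e1]
    have e2 : (if eC c = eC c' then (1 : ℝ) else 0) = if c = c' then 1 else 0 :=
      if_congr (Equiv.apply_eq_iff_eq eC) rfl rfl
    cases hob : eB b with
    | some a => rw [gram_ss_same m a (eC c) (eC c'), e2]
    | none => rw [gram_nn m (eC c) (eC c'), e2]
  -- clause 2 : coherence bound
  have habsμ : ∀ (t w t' w' : V m),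
      |(qK m)⁻¹ * (qK m)⁻¹ * (Had m t w * Had m t' w')| = 1 / ((2 ^ m : ℝ) ^ 2) := by
    intro t w t' w'
    have h1 : |(qK m)⁻¹ * (qK m)⁻¹ * (Had m t w * Had m t' w')|
        = |(qK m)⁻¹ * (qK m)⁻¹| * (|Had m t w| * |Had m t' w'|) := by
      simp [abs_mul]
    rw [h1, abs_Had, abs_Had, mul_one,
      abs_of_pos (mul_pos (inv_pos.mpr (qK_pos m)) (inv_pos.mpr (qK_pos m))), hμ, mul_one]
  have clause2 : ∀ p p' : Fin (2 ^ m + 1) × Fin ((2 ^ m) ^ 4), p ≠ p' →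
      |∑ r, D r p * D r p'| ≤ 1 / ((2 ^ m : ℝ) ^ 2) := by
    rintro ⟨b, c⟩ ⟨b', c'⟩ hne
    have e1 : (∑ r, D r (b, c) * D r (b', c'))
        = ∑ rc : V m × V m, Dabs m rc (eB b, eC c) * Dabs m rc (eB b', eC c') :=
      Fintype.sum_equiv eC _ _ (fun r => rfl)
    rw [e1]
    by_cases hb : b = b'
    · subst hb
      have hcc : c ≠ c' := fun h => hne (by rw [h])
      have := clause1 b c c'
      rw [e1] at this
      rw [this, if_neg hcc, abs_zero]
      positivity
    · have hob : eB b ≠ eB b' := fun h => hb (eB.injective h)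
      cases h1 : eB b with
      | some a =>
        cases h2 : eB b' with
        | some a' =>
          have haa : a ≠ a' := by
            intro h; apply hob; rw [h1, h2, h]
          rw [gram_ss_ne m haa, habsμ]
        | none =>
          rw [gram_sn m a (eC c) (eC c'), habsμ]
      | none =>
        cases h2 : eB b' with
        | some a' =>
          have hswap : ∑ rc : V m × V m, Dabs m rc (none, eC c) * Dabs m rc (some a', eC c')
              = ∑ rc : V m × V m, Dabs m rc (some a', eC c') * Dabs m rc (none, eC c) :=
            Finset.sum_congr rfl (fun rc _ => mul_comm _ _)
          rw [hswap, gram_sn m a' (eC c') (eC c), habsμ]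
        | none =>
          exact absurd (h1.trans h2.symm) hob
  refine ⟨D, clause1, clause2, ?_, ?_, ?_⟩
  -- clause 3 : coherence attained
  · refine ⟨(eB.symm (some 0), eC.symm 0), (eB.symm (some 1), eC.symm 0), ?_, ?_⟩
    · intro h
      have h1 := congrArg Prod.fst h
      simp only at h1
      have := eB.symm.injective h1
      have h01 : (0 : K m) ≠ 1 := zero_ne_one
      simp only [Option.some.injEq] at this
      exact h01 this
    · have e1 : (∑ r, D r (eB.symm (some 0), eC.symm 0) * D r (eB.symm (some 1), eC.symm 0))
          = ∑ rc : V m × V m, Dabs m rc (some 0, (0 : V m × V m)) *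
              Dabs m rc (some 1, (0 : V m × V m)) := by
        apply Fintype.sum_equiv eC
        intro r
        simp [hD]
      rw [e1, gram_ss_ne m (zero_ne_one (α := K m))]
      simp only [Prod.snd_zero, Had_zero, mul_one]
      rw [abs_of_pos (mul_pos (inv_pos.mpr (qK_pos m)) (inv_pos.mpr (qK_pos m)))]
      exact hμ
  -- clause 4 : the sparse null vector
  · set x : (Fin (2 ^ m + 1) × Fin ((2 ^ m) ^ 4)) → ℝ :=
      fun p => xabs m (eB p.1, eC p.2) with hx
    refine ⟨x, ?_, ?_, ?_⟩
    · intro h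
      have := congrFun h (eB.symm none, eC.symm 0)
      simp only [hx, Equiv.apply_symm_apply, Pi.zero_apply] at this
      rw [xabs_none] at this
      simp at this
    · intro r
      have e1 : (∑ c, D r c * x c)
          = ∑ p : Option (K m) × (V m × V m), Dabs m (eC r) p * xabs m p :=
        Fintype.sum_equiv (Equiv.prodCongr eB eC) _ _ (fun c => rfl)
      rw [e1, null_total]
    · have e1 : (univ.filter fun c => x c ≠ 0).card
          = (univ.filter fun p => xabs m p ≠ 0).card := by
        have := filter_card_equiv (Equiv.prodCongr eB eC) (fun p => xabs m p ≠ 0)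
        exact this
      rw [e1, xabs_card, hcK]
      ring
  -- clause 5 : spark lower bound
  · intro x hx hnull
    have hq : 0 < 2 ^ m := by positivity
    have h2' : ∀ p p' : Fin (2 ^ m + 1) × Fin ((2 ^ m) ^ 4), p ≠ p' →
        |∑ r, D r p * D r p'| ≤ 1 / ((2 ^ m : ℕ) : ℝ) ^ 2 := by
      intro p p' h
      have := clause2 p p' h
      convert this using 2
      push_cast
      ring
    exact spark_lower hq D clause1 h2' x hx hnull
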